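/- Let $p_1,q_1,r_1\in[1,\infty)$ with $1/p_1+1/q_1=1/r_1+1$, and let $f,g:\mathbb{R}\times\mathbb{R}^{n-1}\to[0,\infty]$ be measurable. Define $F(\hat{y})=\left(\int_{\mathbb{R}}f(y_1,\hat{y})^{p_1}dy_1\right)^{1/p_1}$ and $G(\hat{t})=\left(\int_{\mathbb{R}}g(t_1,\hat{t})^{q_1}dt_1\right)^{1/q_1}$. Then for every $(x_1,\hat{x})$, $\left(\int_{\mathbb{R}}(f*g)(x_1,\hat{x})^{r_1}dx_1\right)^{1/r_1}\le (F*G)(\hat{x})$, where the left convolution is over $\mathbb{R}^n$ and the right convolution is over $\mathbb{R}^{n-1}$. -/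

import Mathlib

/-!
By Tonelli, the convolution on `ℝ × ℝᵐ` is an iterated integral whose inner integral runs over
the first coordinate. Minkowski's integral inequality (here `r₁ ≥ 1` is needed) moves the
`L^{r₁}` norm in `x₁` inside the integral over `ℝᵐ`. There, for each fixed `t̂`, the
one-dimensional Young inequality bounds it by the product of the fibrewise `L^{p₁}` and
`L^{q₁}` norms.

Minkowski is proved by Hölder duality, `‖Φ‖ᵣʳ = ∫ Φ · Φ^{r-1} ≤ ‖Φ‖ᵣ^{r-1} · ∫ ‖H(·, y)‖ᵣ dy`,
applied to truncations of `Φ` so that the factor `‖Φ‖ᵣ^{r-1}` can be cancelled; σ-finiteness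
provides the truncations. Young follows from the three-factor Hölder inequality applied to
`f(x-t) g(t) = (f(x-t)^p g(t)^q)^{1/r} (f(x-t)^p)^{1/p-1/r} (g(t)^q)^{1/q-1/r}`.
-/

open MeasureTheory ENNReal

namespace ENNReal

lemma rpow_mul_rpow_sub (x : ℝ≥0∞) {s t : ℝ} (hs : 0 ≤ s) (hst : s ≤ t) :
    x ^ s * x ^ (t - s) = x ^ t := by
  rw [← rpow_add_of_nonneg _ _ hs (sub_nonneg.2 hst), add_sub_cancel]

lemma iSup_min_natCast_rpow (x : ℝ≥0∞) {r : ℝ} (hr : 0 < r) :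
    ⨆ n : ℕ, min x n ^ r = x ^ r := by
  have hsup : ⨆ n : ℕ, min x n = x := by
    rw [← inf_iSup_eq, iSup_natCast, inf_top_eq]
  rw [← Monotone.map_iSup_of_continuousAt (f := fun y : ℝ≥0∞ => y ^ r)
    continuous_rpow_const.continuousAt (fun _ _ h => rpow_le_rpow h hr.le) (zero_rpow_of_pos hr),
    hsup]

lemma rpow_le_of_le_mul_rpow {p q : ℝ} (hpq : p.HolderConjugate q) {I J : ℝ≥0∞} (hI : I ≠ ∞)
    (h : I ≤ J * I ^ (1 / q)) : I ^ (1 / p) ≤ J := by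
  rcases eq_or_ne I 0 with rfl | hI0
  · rw [zero_rpow_of_pos (one_div_pos.2 hpq.pos)]
    exact zero_le
  have hsplit : I ^ (1 / p) * I ^ (1 / q) = I := by
    rw [← rpow_add _ _ hI0 hI, one_div, one_div, hpq.inv_add_inv_eq_one, rpow_one]
  refine (ENNReal.mul_le_mul_iff_left (rpow_pos (pos_iff_ne_zero.2 hI0) hI).ne'
    (rpow_ne_top_of_nonneg (one_div_pos.2 hpq.symm.pos).le hI)).1 ?_
  rwa [hsplit]

lemma mul_eq_rpow_mul_rpow_mul_rpow (a b : ℝ≥0∞) {p q r : ℝ} (hp : 0 < p) (hq : 0 < q)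
    (hr : 0 < r) (hrp : 1 / r ≤ 1 / p) (hrq : 1 / r ≤ 1 / q) :
    (a ^ p * b ^ q) ^ (1 / r) * (a ^ p) ^ (1 / p - 1 / r) * (b ^ q) ^ (1 / q - 1 / r)
      = a * b := by
  have hr' : (0 : ℝ) ≤ 1 / r := by positivity
  calc _ = ((a ^ p) ^ (1 / r) * (a ^ p) ^ (1 / p - 1 / r))
        * ((b ^ q) ^ (1 / r) * (b ^ q) ^ (1 / q - 1 / r)) := by
          rw [mul_rpow_of_nonneg _ _ hr']; ring
    _ = a * b := by
      rw [rpow_mul_rpow_sub _ hr' hrp, rpow_mul_rpow_sub _ hr' hrq, one_div, one_div,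
        rpow_rpow_inv hp.ne', rpow_rpow_inv hq.ne']

end ENNReal

theorem lintegral_rpow_mul_rpow_mul_rpow_le {α : Type*} [MeasurableSpace α] {μ : Measure α}
    {f₁ f₂ f₃ : α → ℝ≥0∞} (h₁ : AEMeasurable f₁ μ)
    (h₂ : AEMeasurable f₂ μ) (h₃ : AEMeasurable f₃ μ) {a b c : ℝ} (ha : 0 ≤ a) (hb : 0 ≤ b)
    (hc : 0 ≤ c) (habc : a + b + c = 1) :
    ∫⁻ x, f₁ x ^ a * f₂ x ^ b * f₃ x ^ c ∂μ ≤
      (∫⁻ x, f₁ x ∂μ) ^ a * (∫⁻ x, f₂ x ∂μ) ^ b * (∫⁻ x, f₃ x ∂μ) ^ c := by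
  have := lintegral_prod_norm_pow_le (μ := μ) Finset.univ (f := ![f₁, f₂, f₃]) (p := ![a, b, c])
    (by intro i _; fin_cases i <;> assumption) (by simp [Fin.sum_univ_three, habc])
    (by intro i _; fin_cases i <;> assumption)
  simpa [Fin.prod_univ_three] using this

section Minkowski

variable {α β : Type*} [MeasurableSpace α] [MeasurableSpace β] {μ : Measure α} {ν : Measure β}

theorem lintegral_rpow_le_of_forall_lintegral_rpow_ne_top_le [SigmaFinite μ] {f : α → ℝ≥0∞}
    (hf : Measurable f) {r : ℝ} (hr : 0 < r) {C : ℝ≥0∞}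
    (h : ∀ g : α → ℝ≥0∞, Measurable g → g ≤ f → ∫⁻ x, g x ^ r ∂μ ≠ ∞ → ∫⁻ x, g x ^ r ∂μ ≤ C) :
    ∫⁻ x, f x ^ r ∂μ ≤ C := by
  refine lintegral_le_of_forall_fin_meas_le C fun s hs hμs => ?_
  have htrunc : ∀ n : ℕ, ∫⁻ x in s, min (f x) n ^ r ∂μ ≤ C := by
    intro n
    set g := s.indicator fun x => min (f x) n
    have hg : ∫⁻ x, g x ^ r ∂μ = ∫⁻ x in s, min (f x) n ^ r ∂μ := by
      rw [← lintegral_indicator hs]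
      congr 1 with x
      exact (congrFun (Set.indicator_comp_of_zero (g := (· ^ r)) (zero_rpow_of_pos hr)) x).symm
    have hg_fin : ∫⁻ x in s, min (f x) n ^ r ∂μ ≠ ∞ := by
      refine ne_top_of_le_ne_top ?_ (lintegral_mono fun x => rpow_le_rpow (min_le_right _ _) hr.le)
      rw [setLIntegral_const]
      exact mul_ne_top (rpow_ne_top_of_nonneg hr.le (natCast_ne_top n)) hμs
    rw [← hg] at hg_fin ⊢
    exact h g ((hf.min measurable_const).indicator hs)
      (Set.indicator_le fun x _ => min_le_left _ _) hg_fin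
  calc ∫⁻ x in s, f x ^ r ∂μ = ∫⁻ x in s, ⨆ n : ℕ, min (f x) n ^ r ∂μ := by
        simp_rw [iSup_min_natCast_rpow _ hr]
    _ = ⨆ n : ℕ, ∫⁻ x in s, min (f x) n ^ r ∂μ :=
        lintegral_iSup (fun n => (hf.min measurable_const).pow_const r)
          fun m n hmn x => rpow_le_rpow (min_le_min le_rfl (Nat.cast_le.2 hmn)) hr.le
    _ ≤ C := iSup_le htrunc

theorem lintegral_rpow_le_of_le_lintegral [SFinite μ] [SFinite ν] {H : α → β → ℝ≥0∞}
    (hH : Measurable (Function.uncurry H)) {r : ℝ} (hr : 1 < r) {g : α → ℝ≥0∞}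
    (hg : Measurable g) (hgH : ∀ x, g x ≤ ∫⁻ y, H x y ∂ν) (hfin : ∫⁻ x, g x ^ r ∂μ ≠ ∞) :
    (∫⁻ x, g x ^ r ∂μ) ^ (1 / r) ≤ ∫⁻ y, (∫⁻ x, H x y ^ r ∂μ) ^ (1 / r) ∂ν := by
  have hconj := Real.HolderConjugate.conjExponent hr
  refine rpow_le_of_le_mul_rpow hconj hfin ?_
  calc ∫⁻ x, g x ^ r ∂μ = ∫⁻ x, g x * g x ^ (r - 1) ∂μ := by
        congr with x
        nth_rw 2 [← rpow_one (g x)]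
        rw [← rpow_add_of_nonneg _ _ zero_le_one (by linarith), add_sub_cancel]
    _ ≤ ∫⁻ x, (∫⁻ y, H x y ∂ν) * g x ^ (r - 1) ∂μ := by gcongr with x; exact hgH x
    _ = ∫⁻ x, ∫⁻ y, H x y * g x ^ (r - 1) ∂ν ∂μ := by
        congr with x
        rw [lintegral_mul_const _ hH.of_uncurry_left]
    _ = ∫⁻ y, ∫⁻ x, H x y * g x ^ (r - 1) ∂μ ∂ν :=
        lintegral_lintegral_swap (hH.mul ((hg.comp measurable_fst).pow_const _)).aemeasurable
    _ ≤ ∫⁻ y, (∫⁻ x, H x y ^ r ∂μ) ^ (1 / r) * (∫⁻ x, g x ^ r ∂μ) ^ (1 / r.conjExponent) ∂ν :=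
        lintegral_mono fun y => lintegral_mul_rpow_le_lintegral_rpow_mul_lintegral_rpow hconj
          hH.of_uncurry_right.aemeasurable hg.aemeasurable
    _ = _ := lintegral_mul_const' _ _ (rpow_ne_top_of_nonneg (one_div_pos.2 hconj.symm.pos).le hfin)

theorem lintegral_lintegral_rpow_le [SigmaFinite μ] [SFinite ν] {H : α → β → ℝ≥0∞}
    (hH : Measurable (Function.uncurry H)) {r : ℝ} (hr : 1 ≤ r) :
    (∫⁻ x, (∫⁻ y, H x y ∂ν) ^ r ∂μ) ^ (1 / r) ≤ ∫⁻ y, (∫⁻ x, H x y ^ r ∂μ) ^ (1 / r) ∂ν := by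
  rcases hr.eq_or_lt with rfl | hr
  · simpa using (lintegral_lintegral_swap hH.aemeasurable).le
  have hr0 : 0 < r := one_pos.trans hr
  rw [one_div, rpow_inv_le_iff hr0]
  refine lintegral_rpow_le_of_forall_lintegral_rpow_ne_top_le hH.lintegral_prod_right hr0
    fun g hg hgH hfin => ?_
  rw [← rpow_inv_le_iff hr0, ← one_div]
  exact lintegral_rpow_le_of_le_lintegral hH hr hg hgH hfin

end Minkowski

section Young

variable {G : Type*} [MeasurableSpace G] [AddCommGroup G] [MeasurableAdd₂ G] [MeasurableNeg G]
  {μ : Measure G} [SFinite μ] [μ.IsAddLeftInvariant] [μ.IsNegInvariant]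

theorem lintegral_convolution_rpow_le {p q r : ℝ} (hp : 1 ≤ p) (hq : 1 ≤ q) (hr : 0 < r)
    (hpqr : 1 / p + 1 / q = 1 / r + 1) {f g : G → ℝ≥0∞} (hf : Measurable f) (hg : Measurable g) :
    (∫⁻ x, (∫⁻ t, f (x - t) * g t ∂μ) ^ r ∂μ) ^ (1 / r) ≤
      (∫⁻ y, f y ^ p ∂μ) ^ (1 / p) * (∫⁻ t, g t ^ q ∂μ) ^ (1 / q) := by
  have hp1 : 1 / p ≤ 1 := by rw [div_le_one (by linarith)]; exact hp
  have hq1 : 1 / q ≤ 1 := by rw [div_le_one (by linarith)]; exact hq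
  have hrp : 1 / r ≤ 1 / p := by linarith
  have hrq : 1 / r ≤ 1 / q := by linarith
  have hr' : (0 : ℝ) ≤ 1 / r := by positivity
  set A := ∫⁻ y, f y ^ p ∂μ
  set B := ∫⁻ t, g t ^ q ∂μ
  set K := A ^ (1 / p - 1 / r) * B ^ (1 / q - 1 / r)
  have hF : Measurable fun z : G × G => f (z.1 - z.2) ^ p * g z.2 ^ q :=
    ((hf.comp measurable_sub).pow_const p).mul ((hg.comp measurable_snd).pow_const q)
  set W : G → ℝ≥0∞ := fun x => ∫⁻ t, f (x - t) ^ p * g t ^ q ∂μ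
  have hW : ∫⁻ x, W x ∂μ = A * B := by
    rw [lintegral_lintegral_swap hF.aemeasurable]
    calc ∫⁻ t, ∫⁻ x, f (x - t) ^ p * g t ^ q ∂μ ∂μ = ∫⁻ t, A * g t ^ q ∂μ := by
          congr 1 with t
          rw [lintegral_mul_const (g t ^ q) (show Measurable fun x => f (x - t) ^ p from
            (hf.comp (measurable_sub_const t)).pow_const p),
            lintegral_sub_right_eq_self (fun y => f y ^ p)]
      _ = A * B := lintegral_const_mul _ (hg.pow_const q)
  have hpointwise : ∀ x, ∫⁻ t, f (x - t) * g t ∂μ ≤ W x ^ (1 / r) * K := by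
    intro x
    have hfx : Measurable fun t => f (x - t) ^ p := (hf.comp (measurable_const_sub x)).pow_const p
    calc ∫⁻ t, f (x - t) * g t ∂μ
        = ∫⁻ t, (f (x - t) ^ p * g t ^ q) ^ (1 / r) * (f (x - t) ^ p) ^ (1 / p - 1 / r)
            * (g t ^ q) ^ (1 / q - 1 / r) ∂μ := by
          congr 1 with t
          exact (mul_eq_rpow_mul_rpow_mul_rpow _ _ (by linarith) (by linarith) hr hrp hrq).symm
      _ ≤ W x ^ (1 / r) * (∫⁻ t, f (x - t) ^ p ∂μ) ^ (1 / p - 1 / r) * B ^ (1 / q - 1 / r) :=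
          lintegral_rpow_mul_rpow_mul_rpow_le (hfx.mul (hg.pow_const q)).aemeasurable
            hfx.aemeasurable (hg.pow_const q).aemeasurable hr' (sub_nonneg.2 hrp)
            (sub_nonneg.2 hrq) (by linarith)
      _ = W x ^ (1 / r) * K := by
          rw [lintegral_sub_left_eq_self (fun y => f y ^ p), mul_assoc]
  calc (∫⁻ x, (∫⁻ t, f (x - t) * g t ∂μ) ^ r ∂μ) ^ (1 / r)
      ≤ (∫⁻ x, (W x ^ (1 / r) * K) ^ r ∂μ) ^ (1 / r) := by
        gcongr with x
        exact hpointwise x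
    _ = (A * B) ^ (1 / r) * K := by
        simp_rw [mul_rpow_of_nonneg _ _ hr.le, one_div, rpow_inv_rpow hr.ne']
        rw [lintegral_mul_const _ hF.lintegral_prod_right', hW,
          mul_rpow_of_nonneg _ _ (inv_nonneg.2 hr.le), rpow_rpow_inv hr.ne']
    _ = A ^ (1 / p) * B ^ (1 / q) := by
        rw [mul_rpow_of_nonneg _ _ hr', mul_mul_mul_comm, rpow_mul_rpow_sub _ hr' hrp,
          rpow_mul_rpow_sub _ hr' hrq]

end Young

/-- The recursive step in the mixed-norm Young inequality: the `L^{r₁}` norm in the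
first variable of a convolution on `ℝ × ℝ^{n-1}` is dominated by the convolution on
`ℝ^{n-1}` of the `L^{p₁}` and `L^{q₁}` norms in the first variable. -/
theorem young_recursive_step
    (m : ℕ) (p1 q1 r1 : ℝ) (hp : 1 ≤ p1) (hq : 1 ≤ q1) (hr : 1 ≤ r1)
    (hpqr : 1 / p1 + 1 / q1 = 1 / r1 + 1)
    (f g : ℝ × (Fin m → ℝ) → ℝ≥0∞) (hf : Measurable f) (hg : Measurable g)
    (xh : Fin m → ℝ) :
    (∫⁻ x1 : ℝ,
        (∫⁻ t : ℝ × (Fin m → ℝ), f ((x1, xh) - t) * g t) ^ r1) ^ (1 / r1)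
      ≤ ∫⁻ th : Fin m → ℝ,
          (∫⁻ y1 : ℝ, f (y1, xh - th) ^ p1) ^ (1 / p1)
            * (∫⁻ t1 : ℝ, g (t1, th) ^ q1) ^ (1 / q1) := by
  have hfiber : ∀ x1 : ℝ, ∫⁻ t : ℝ × (Fin m → ℝ), f ((x1, xh) - t) * g t
      = ∫⁻ th, ∫⁻ t1, f (x1 - t1, xh - th) * g (t1, th) := fun x1 => by
    rw [Measure.volume_eq_prod, lintegral_prod_symm (fun t => f ((x1, xh) - t) * g t)
      ((hf.comp (measurable_const_sub _)).mul hg).aemeasurable]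
    rfl
  have hH : Measurable (Function.uncurry fun x1 (th : Fin m → ℝ) =>
      ∫⁻ t1, f (x1 - t1, xh - th) * g (t1, th)) :=
    Measurable.lintegral_prod_right ((hf.comp (by fun_prop)).mul (hg.comp (by fun_prop)))
  simp_rw [hfiber]
  refine (lintegral_lintegral_rpow_le hH hr).trans (lintegral_mono fun th => ?_)
  exact lintegral_convolution_rpow_le hp hq (by linarith) hpqr
    (hf.comp (by fun_prop)) (hg.comp (by fun_prop))
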